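/- arXiv:math/0503306 — 5 statements merged into one kernel-verified Lean document; each statement's English description precedes it below -/
import Mathlib

section
/- Composition ∗ of Brauerian split equivalences between finite ordinals is associative: for R : m ⊢ n, P : n ⊢ k, Q : k ⊢ l Brauerian split equivalences, Q ∗ (P ∗ R) = (Q ∗ P) ∗ R. -/
/-! Both bracketings are the restriction to the outer ends of the transitive closure of
`R ∪ P ∪ Q` on the four-part union. For `Q ∗ (P ∗ R)`, say, a path of that closure between
outer points cuts at its `Q`-steps, whose endpoints are outer or in the third part, into
`R ∪ P`-paths between such points, i.e. into steps of `P ∗ R`; conversely every step of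
`P ∗ R` unfolds into such a path. -/

open Sum

/-- Embed the first split relation's carrier into the three-part disjoint union. -/
def embR {α β γ : Type} : α ⊕ β → α ⊕ (β ⊕ γ)
  | inl a => inl a
  | inr b => inr (inl b)

/-- Embed the second split relation's carrier into the three-part disjoint union. -/
def embP {α β γ : Type} : β ⊕ γ → α ⊕ (β ⊕ γ)
  | inl b => inr (inl b)
  | inr c => inr (inr c)

/-- Embed the composite's carrier into the three-part disjoint union. -/
def embO {α β γ : Type} : α ⊕ γ → α ⊕ (β ⊕ γ)
  | inl a => inl a
  | inr c => inr (inr c)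

/-- The union R^{-t} ∪ P^{-s} viewed inside the disjoint union of all three parts. -/
def unionRel {α β γ : Type} (R : α ⊕ β → α ⊕ β → Prop) (P : β ⊕ γ → β ⊕ γ → Prop)
    (x y : α ⊕ (β ⊕ γ)) : Prop :=
  (∃ u v, embR (γ := γ) u = x ∧ embR (γ := γ) v = y ∧ R u v) ∨
  (∃ u v, embP (α := α) u = x ∧ embP (α := α) v = y ∧ P u v)

/-- The composite P ∗ R = Tr(R^{-t} ∪ P^{-s}) ∩ (X^s ∪ Z^t)². -/
def splitComp {α β γ : Type} (R : α ⊕ β → α ⊕ β → Prop) (P : β ⊕ γ → β ⊕ γ → Prop)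
    (x y : α ⊕ γ) : Prop :=
  Relation.TransGen (unionRel R P) (embO (β := β) x) (embO (β := β) y)

/-- A Brauerian split equivalence: an equivalence relation all of whose classes
are two-element sets (every element has a unique partner distinct from itself). -/
def IsBrauerian {σ : Type} (R : σ → σ → Prop) : Prop :=
  Equivalence R ∧ ∀ u, ∃ v, v ≠ u ∧ R u v ∧ ∀ w, R u w → w = u ∨ w = v

/-- The identity Brauerian split equivalence 1ₙ, with classes {kₛ, kₜ} for k < n. -/
def idBr (n : ℕ) (x y : Fin n ⊕ Fin n) : Prop :=
  Sum.elim Fin.val Fin.val x = Sum.elim Fin.val Fin.val y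

/-- A two-element class {u, v} is a transversal: one source, one target element. -/
def IsTransversal {α β : Type} (u v : α ⊕ β) : Prop :=
  ∃ a b, (u = inl a ∧ v = inr b) ∨ (u = inr b ∧ v = inl a)

/-- A two-element class {u, v} is a cup: both elements on the source side. -/
def IsCup {α β : Type} (u v : α ⊕ β) : Prop :=
  ∃ a a', u = inl a ∧ v = inl a'

/-- A two-element class {u, v} is a cap: both elements on the target side. -/
def IsCap {α β : Type} (u v : α ⊕ β) : Prop :=
  ∃ b b', u = inr b ∧ v = inr b'

open Function

namespace Relation

variable {W X Y Z : Type*}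

theorem TransGen.mem_range_of_map {r : Y → Y → Prop} {f : Y → X} {c d : X}
    (h : TransGen (Relation.Map r f f) c d) : c ∈ Set.range f ∧ d ∈ Set.range f := by
  obtain ⟨_, ⟨a, _, _, hac, _⟩, -⟩ := TransGen.head'_iff.mp h
  obtain ⟨_, -, ⟨_, b, _, _, hbd⟩⟩ := TransGen.tail'_iff.mp h
  exact ⟨⟨a, hac⟩, ⟨b, hbd⟩⟩

theorem transGen_map_iff {r : Y → Y → Prop} {f : Y → X} (hf : Injective f) {a b : Y} :
    TransGen (Relation.Map r f f) (f a) (f b) ↔ TransGen r a b := by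
  refine ⟨fun h => ?_, TransGen.lift f (fun a b h => ⟨a, b, h, rfl, rfl⟩) a b⟩
  suffices ∀ d, TransGen (Relation.Map r f f) (f a) d → ∀ b, f b = d → TransGen r a b from
    this _ h b rfl
  intro d h
  induction h with
  | single hcd =>
    obtain ⟨a', b', h, ha', rfl⟩ := hcd
    rintro b hb
    rw [← hf ha', hf hb]
    exact .single h
  | tail _ hcd ih =>
    obtain ⟨c', b', h, rfl, rfl⟩ := hcd
    rintro b hb
    exact .tail (ih c' rfl) (hf hb ▸ h)

theorem map_sup {r s : Y → Y → Prop} {f : Y → X} :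
    Relation.Map (r ⊔ s) f f = Relation.Map r f f ⊔ Relation.Map s f f := by
  ext c d
  constructor
  · rintro ⟨a, b, h | h, rfl, rfl⟩
    exacts [Or.inl ⟨a, b, h, rfl, rfl⟩, Or.inr ⟨a, b, h, rfl, rfl⟩]
  · rintro (⟨a, b, h, rfl, rfl⟩ | ⟨a, b, h, rfl, rfl⟩)
    exacts [⟨a, b, Or.inl h, rfl, rfl⟩, ⟨a, b, Or.inr h, rfl, rfl⟩]

theorem map_comp_apply_apply {r : Z → Z → Prop} {g : Z → Y} {f : Y → X} (hf : Injective f)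
    {a b : Y} : Relation.Map r (f ∘ g) (f ∘ g) (f a) (f b) ↔ Relation.Map r g g a b := by
  rw [← map_map, map_apply_apply hf hf]

theorem map_transGen_onFun_iff {ρ : Z → Z → Prop} {e : W → Z} {i : W → Y} {j : Z → X}
    {f : Y → X} (hj : Injective j) (hcomm : ∀ w, j (e w) = f (i w))
    (hrange : ∀ z y, j z = f y → ∃ w, i w = y) {y y' : Y} :
    Relation.Map (TransGen ρ on e) i i y y' ↔ TransGen (Relation.Map ρ j j) (f y) (f y') := by
  constructor
  · rintro ⟨w, w', h, rfl, rfl⟩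
    rw [← hcomm, ← hcomm]
    exact (transGen_map_iff hj).mpr h
  · intro h
    obtain ⟨⟨z, hz⟩, ⟨z', hz'⟩⟩ := h.mem_range_of_map
    obtain ⟨w, rfl⟩ := hrange z y hz
    obtain ⟨w', rfl⟩ := hrange z' y' hz'
    rw [← hcomm, ← hcomm, transGen_map_iff hj] at h
    exact ⟨w, w', h, rfl, rfl⟩

theorem transGen_onFun_sup_iff {r₁ r₂ : X → X → Prop} {f : Y → X} (hf : Injective f)
    (h₂ : ∀ c d, r₂ c d → c ∈ Set.range f ∧ d ∈ Set.range f) {a b : Y} :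
    TransGen ((TransGen r₁ on f) ⊔ (r₂ on f)) a b ↔ TransGen (r₁ ⊔ r₂) (f a) (f b) := by
  set t := (TransGen r₁ on f) ⊔ (r₂ on f)
  have visible : ∀ {c d}, ReflTransGen r₁ (f c) (f d) → ReflTransGen t c d := by
    intro c d h
    rcases reflTransGen_iff_eq_or_transGen.mp h with h | h
    · rw [hf h]
    · exact .single (Or.inl h)
  have last_visible : ∀ {c}, ReflTransGen (r₁ ⊔ r₂) (f a) c →
      ∃ d, ReflTransGen t a d ∧ ReflTransGen r₁ (f d) c := by
    intro c h
    induction h with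
    | refl => exact ⟨a, .refl, .refl⟩
    | tail _ hce ih =>
      obtain ⟨d, had, hdc⟩ := ih
      rcases hce with hce | hce
      · exact ⟨d, had, hdc.tail hce⟩
      · obtain ⟨⟨c', rfl⟩, ⟨e', rfl⟩⟩ := h₂ _ _ hce
        exact ⟨e', (had.trans (visible hdc)).tail (Or.inr hce), .refl⟩
  refine ⟨TransGen.lift' f (fun c d h => ?_) a b, fun h => ?_⟩
  · rcases h with h | h
    · exact TransGen.mono (fun _ _ => Or.inl) _ _ h
    · exact .single (Or.inr h)
  · obtain ⟨c, hac, hcb⟩ := TransGen.tail'_iff.mp h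
    obtain ⟨d, had, hdc⟩ := last_visible hac
    rcases hcb with hcb | hcb
    · exact TransGen.trans_right had (.single (Or.inl (TransGen.tail' hdc hcb)))
    · obtain ⟨⟨c', rfl⟩, -⟩ := h₂ _ _ hcb
      exact TransGen.tail' (had.trans (visible hdc)) (Or.inr hcb)

end Relation

open Relation

section

variable {α β γ δ : Type}

theorem embP_injective : Injective (embP : β ⊕ γ → α ⊕ (β ⊕ γ)) := by
  rintro (_ | _) (_ | _) h <;> simp_all [embP]

theorem embO_injective : Injective (embO : α ⊕ γ → α ⊕ (β ⊕ γ)) := by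
  rintro (_ | _) (_ | _) h <;> simp_all [embO]

theorem unionRel_eq (A : α ⊕ β → α ⊕ β → Prop) (B : β ⊕ γ → β ⊕ γ → Prop) :
    unionRel A B = Relation.Map A embR embR ⊔ Relation.Map B embP embP := by
  ext x y
  exact or_congr (exists₂_congr fun _ _ => and_rotate.symm)
    (exists₂_congr fun _ _ => and_rotate.symm)

def splitComp₃ (R : α ⊕ β → α ⊕ β → Prop) (P : β ⊕ γ → β ⊕ γ → Prop)
    (Q : γ ⊕ δ → γ ⊕ δ → Prop) (x y : α ⊕ δ) : Prop :=
  TransGen (unionRel R (unionRel P Q)) (Sum.map id (inr ∘ inr) x) (Sum.map id (inr ∘ inr) y)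

variable (R : α ⊕ β → α ⊕ β → Prop) (P : β ⊕ γ → β ⊕ γ → Prop) (Q : γ ⊕ δ → γ ⊕ δ → Prop)

theorem splitComp_splitComp_left : splitComp (splitComp R P) Q = splitComp₃ R P Q := by
  ext x y
  set j : α ⊕ (β ⊕ γ) → α ⊕ (β ⊕ (γ ⊕ δ)) := Sum.map id (Sum.map id inl)
  have hj : Injective j :=
    Sum.map_injective.mpr ⟨injective_id, Sum.map_injective.mpr ⟨injective_id, inl_injective⟩⟩
  have hsplit : unionRel (splitComp R P) Q =
      (TransGen (Relation.Map (unionRel R P) j j) on embO) ⊔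
        (Relation.Map Q (embO ∘ embP) (embO ∘ embP) on embO (β := β)) := by
    ext y y'
    rw [unionRel_eq]
    refine or_congr (map_transGen_onFun_iff hj ?_ ?_) (map_comp_apply_apply embO_injective).symm
    · rintro (_ | _) <;> rfl
    · rintro (a | b | c) (a' | c' | d') h <;> simp_all [embO, embR, j, Sum.exists]
  have hunion : Relation.Map (unionRel R P) j j ⊔
      Relation.Map Q (embO (β := β) ∘ embP) (embO ∘ embP) = unionRel R (unionRel P Q) := by
    simp only [unionRel_eq, map_sup, Relation.map_map, sup_assoc]
    congr 3 <;> funext u <;> rcases u with _ | _ <;> rfl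
  unfold splitComp₃
  rw [splitComp, hsplit, transGen_onFun_sup_iff embO_injective, hunion]
  · rcases x with _ | _ <;> rcases y with _ | _ <;> rfl
  · rintro _ _ ⟨u, v, -, rfl, rfl⟩
    exact ⟨⟨_, rfl⟩, ⟨_, rfl⟩⟩

theorem splitComp_splitComp_right : splitComp R (splitComp P Q) = splitComp₃ R P Q := by
  ext x y
  set f : α ⊕ (β ⊕ δ) → α ⊕ (β ⊕ (γ ⊕ δ)) := Sum.map id (Sum.map id inr)
  have hf : Injective f :=
    Sum.map_injective.mpr ⟨injective_id, Sum.map_injective.mpr ⟨injective_id, inr_injective⟩⟩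
  have hfR : f ∘ embR = embR := by funext u; rcases u with _ | _ <;> rfl
  have hsplit : unionRel R (splitComp P Q) =
      (Relation.Map R (f ∘ embR) (f ∘ embR) on f) ⊔
        (TransGen (Relation.Map (unionRel P Q) embP embP) on f) := by
    ext y y'
    rw [unionRel_eq]
    refine or_congr (map_comp_apply_apply hf).symm (map_transGen_onFun_iff embP_injective ?_ ?_)
    · rintro (_ | _) <;> rfl
    · rintro (b | c | d) (a' | b' | d') h <;> simp_all [embP, f, Sum.exists]
  unfold splitComp₃
  rw [splitComp, hsplit, sup_comm, transGen_onFun_sup_iff hf, sup_comm, hfR, ← unionRel_eq]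
  · rcases x with _ | _ <;> rcases y with _ | _ <;> rfl
  · rintro _ _ ⟨u, v, -, rfl, rfl⟩
    exact ⟨⟨_, rfl⟩, ⟨_, rfl⟩⟩

end

theorem splitComp_assoc_general {m n k l : ℕ}
    (R : Fin m ⊕ Fin n → Fin m ⊕ Fin n → Prop)
    (P : Fin n ⊕ Fin k → Fin n ⊕ Fin k → Prop)
    (Q : Fin k ⊕ Fin l → Fin k ⊕ Fin l → Prop) :
    ∀ x y, splitComp (splitComp R P) Q x y ↔ splitComp R (splitComp P Q) x y := by
  intro x y
  rw [splitComp_splitComp_left, splitComp_splitComp_right]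

/-- composition of Brauerian split equivalences is associative. -/
theorem splitComp_assoc {m n k l : ℕ}
    (R : Fin m ⊕ Fin n → Fin m ⊕ Fin n → Prop)
    (P : Fin n ⊕ Fin k → Fin n ⊕ Fin k → Prop)
    (Q : Fin k ⊕ Fin l → Fin k ⊕ Fin l → Prop)
    (hR : IsBrauerian R) (hP : IsBrauerian P) (hQ : IsBrauerian Q) :
    ∀ x y, splitComp (splitComp R P) Q x y ↔ splitComp R (splitComp P Q) x y :=
  splitComp_assoc_general R P Q
end

section
/- The identity split equivalence 1_n, whose partition is {{m_s, m_t} : m < n}, is a two-sided identity for the composition ∗ of Brauerian split equivalences: for every Brauerian split equivalence R : m ⊢ n one has 1_n ∗ R = R and R ∗ 1_m = R. -/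
open Sum

/-- the identity split equivalence is a two-sided identity for ∗. -/
theorem idBr_identity {m n : ℕ}
    (R : Fin m ⊕ Fin n → Fin m ⊕ Fin n → Prop) (hR : IsBrauerian R) :
    (∀ x y, splitComp R (idBr n) x y ↔ R x y) ∧
    (∀ x y, splitComp (idBr m) R x y ↔ R x y) := by
  obtain ⟨hEq, -⟩ := hR
  constructor
  · intro x y
    constructor
    · intro h
      let φ : Fin m ⊕ (Fin n ⊕ Fin n) → Fin m ⊕ Fin n :=
        fun z => match z with
          | inl a => inl a
          | inr (inl k) => inr k
          | inr (inr k) => inr k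
      have step : ∀ a b, unionRel R (idBr n) a b → R (φ a) (φ b) := by
        rintro a b (⟨u, v, rfl, rfl, huv⟩ | ⟨u, v, rfl, rfl, huv⟩)
        · cases u <;> cases v <;> exact huv
        · cases u <;> cases v <;>
          · simp only [idBr, Sum.elim_inl, Sum.elim_inr] at huv
            have := Fin.val_injective huv
            subst this
            exact hEq.refl _
      have key : ∀ a b, Relation.TransGen (unionRel R (idBr n)) a b → R (φ a) (φ b) := by
        intro a b hab
        induction hab with
        | single h' => exact step _ _ h'
        | tail _ h' ih => exact hEq.trans ih (step _ _ h')
      have := key _ _ h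
      cases x <;> cases y <;> exact this
    · intro h
      have idstep : ∀ c : Fin n, unionRel R (idBr n)
          (inr (inl c) : Fin m ⊕ (Fin n ⊕ Fin n)) (inr (inr c)) :=
        fun c => Or.inr ⟨inl c, inr c, rfl, rfl, rfl⟩
      have idstep' : ∀ c : Fin n, unionRel R (idBr n)
          (inr (inr c) : Fin m ⊕ (Fin n ⊕ Fin n)) (inr (inl c)) :=
        fun c => Or.inr ⟨inr c, inl c, rfl, rfl, rfl⟩
      have rstep : ∀ u v, R u v → unionRel R (idBr n) (embR u) (embR v) :=
        fun u v huv => Or.inl ⟨u, v, rfl, rfl, huv⟩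
      cases x with
      | inl a =>
        cases y with
        | inl a' =>
          exact Relation.TransGen.single (rstep (inl a) (inl a') h)
        | inr c =>
          exact (Relation.TransGen.single (rstep (inl a) (inr c) h)).tail (idstep c)
      | inr c =>
        cases y with
        | inl a' =>
          exact Relation.TransGen.head (idstep' c)
            (Relation.TransGen.single (rstep (inr c) (inl a') h))
        | inr c' =>
          exact (Relation.TransGen.head (idstep' c)
            (Relation.TransGen.single (rstep (inr c) (inr c') h))).tail (idstep c')
  · intro x y
    constructor
    · intro h
      let ψ : Fin m ⊕ (Fin m ⊕ Fin n) → Fin m ⊕ Fin n :=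
        fun z => match z with
          | inl a => inl a
          | inr (inl k) => inl k
          | inr (inr k) => inr k
      have step : ∀ a b, unionRel (idBr m) R a b → R (ψ a) (ψ b) := by
        rintro a b (⟨u, v, rfl, rfl, huv⟩ | ⟨u, v, rfl, rfl, huv⟩)
        · cases u <;> cases v <;>
          · simp only [idBr, Sum.elim_inl, Sum.elim_inr] at huv
            have := Fin.val_injective huv
            subst this
            exact hEq.refl _
        · cases u <;> cases v <;> exact huv
      have key : ∀ a b, Relation.TransGen (unionRel (idBr m) R) a b → R (ψ a) (ψ b) := by
        intro a b hab
        induction hab with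
        | single h' => exact step _ _ h'
        | tail _ h' ih => exact hEq.trans ih (step _ _ h')
      have := key _ _ h
      cases x <;> cases y <;> exact this
    · intro h
      have idstep : ∀ a : Fin m, unionRel (idBr m) R
          (inl a : Fin m ⊕ (Fin m ⊕ Fin n)) (inr (inl a)) :=
        fun a => Or.inl ⟨inl a, inr a, rfl, rfl, rfl⟩
      have idstep' : ∀ a : Fin m, unionRel (idBr m) R
          (inr (inl a) : Fin m ⊕ (Fin m ⊕ Fin n)) (inl a) :=
        fun a => Or.inl ⟨inr a, inl a, rfl, rfl, rfl⟩
      have rstep : ∀ u v, R u v → unionRel (idBr m) R (embP u) (embP v) :=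
        fun u v huv => Or.inr ⟨u, v, rfl, rfl, huv⟩
      cases x with
      | inl a =>
        cases y with
        | inl a' =>
          exact Relation.TransGen.head (idstep a)
            ((Relation.TransGen.single (rstep (inl a) (inl a') h)).tail (idstep' a'))
        | inr c =>
          exact Relation.TransGen.head (idstep a)
            (Relation.TransGen.single (rstep (inl a) (inr c) h))
      | inr c =>
        cases y with
        | inl a' =>
          exact (Relation.TransGen.single (rstep (inr c) (inl a') h)).tail (idstep' a')
        | inr c' =>
          exact Relation.TransGen.single (rstep (inr c) (inr c') h)
end

section
/- Composing the graph of Δ∧ with the graph of Σ∨ as in the equation (Σ∨ Δ∧): the composite G(Σ∨_{A,A}) ∗ G(d_{A,¬A,A}) ∗ G(Δ∧_{A,A}) equals the identity Brauerian split equivalence 1_{G(A)}, where G(d) is an identity, G(Δ∧_{A,A}) : n ⊢ 3n has transversals {m_s, m_t} for m < n and caps {m_t, (m+n)_t}-type pairs {m_t, n'_t} for n ≤ m, n' < 3n with |m − n'| = n, and G(Σ∨_{A,A}) : 3n ⊢ n has cups {m_s, n'_s} for m, n' < 2n with |m − n'| = n and transversals {m_s, (m−2n)_t} for 2n ≤ m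 < 3n. -/
/-!
Composing with the identity only glues the middle copy of `3n` to the target copy, so
`G(Δ∧) ∗ 1 = G(Δ∧)`, as for any reflexive transitive relation. In the second composite, every
step of a path preserves the residue mod `n` of a middle position (and the position itself at the
two ends), because the caps of `Δ∧` and the cups of `Σ∨` join positions `n` apart and the
transversal of `Σ∨` shifts by `2n`. Hence only `mₛ` and `mₜ` are connected, and they are, along
the zigzag `m, m + n, m + 2n` through the middle.
-/

open Sum

/-- The graph G(Δ∧_{A,A}) : n ⊢ 3n (n = G A): transversals {mₛ, mₜ} for m < n,
caps {mₜ, m'ₜ} for n ≤ m, m' < 3n with |m − m'| = n. -/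
def gDelta (n : ℕ) (x y : Fin n ⊕ Fin (3 * n)) : Prop :=
  x = y ∨
  (∃ (m : Fin n) (m' : Fin (3 * n)),
    ((x = inl m ∧ y = inr m') ∨ (x = inr m' ∧ y = inl m)) ∧ (m' : ℕ) = (m : ℕ)) ∨
  (∃ m m' : Fin (3 * n), x = inr m ∧ y = inr m' ∧
    n ≤ (m : ℕ) ∧ n ≤ (m' : ℕ) ∧ ((m : ℕ) = (m' : ℕ) + n ∨ (m' : ℕ) = (m : ℕ) + n))

/-- The graph G(Σ∨_{A,A}) : 3n ⊢ n: cups {mₛ, m'ₛ} for m, m' < 2n with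
|m − m'| = n, transversals {mₛ, (m − 2n)ₜ} for 2n ≤ m < 3n. -/
def gSigma (n : ℕ) (x y : Fin (3 * n) ⊕ Fin n) : Prop :=
  x = y ∨
  (∃ m m' : Fin (3 * n), x = inl m ∧ y = inl m' ∧
    (m : ℕ) < 2 * n ∧ (m' : ℕ) < 2 * n ∧
    ((m : ℕ) = (m' : ℕ) + n ∨ (m' : ℕ) = (m : ℕ) + n)) ∨
  (∃ (m : Fin (3 * n)) (v : Fin n),
    ((x = inl m ∧ y = inr v) ∨ (x = inr v ∧ y = inl m)) ∧
    2 * n ≤ (m : ℕ) ∧ (m : ℕ) = (v : ℕ) + 2 * n)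

open Function Relation

section SplitComp

variable {α β γ : Type} {R : α ⊕ β → α ⊕ β → Prop} {P : β ⊕ γ → β ⊕ γ → Prop}

lemma unionRel_of_left {u v : α ⊕ β} (h : R u v) :
    unionRel R P (embR (γ := γ) u) (embR v) :=
  Or.inl ⟨u, v, rfl, rfl, h⟩

lemma unionRel_of_right {u v : β ⊕ γ} (h : P u v) :
    unionRel R P (embP (α := α) u) (embP v) :=
  Or.inr ⟨u, v, rfl, rfl, h⟩

lemma splitComp_induction {S : α ⊕ (β ⊕ γ) → α ⊕ (β ⊕ γ) → Prop} [IsTrans (α ⊕ (β ⊕ γ)) S]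
    (hR : ∀ u v, R u v → S (embR u) (embR v)) (hP : ∀ u v, P u v → S (embP u) (embP v))
    {x y : α ⊕ γ} (h : splitComp R P x y) : S (embO x) (embO y) := by
  refine transGen_minimal ?_ _ _ h
  rintro _ _ (⟨u, v, rfl, rfl, huv⟩ | ⟨u, v, rfl, rfl, huv⟩)
  exacts [hR u v huv, hP u v huv]

instance [Std.Symm R] [Std.Symm P] : Std.Symm (unionRel R P) where
  symm _ _ := by
    rintro (⟨u, v, rfl, rfl, huv⟩ | ⟨u, v, rfl, rfl, huv⟩)
    exacts [unionRel_of_left (symm huv), unionRel_of_right (symm huv)]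

instance [Std.Symm R] [Std.Symm P] : Std.Symm (splitComp R P) where
  symm _ _ h := symm (r := TransGen (unionRel R P)) h

end SplitComp

lemma idBr_iff {m : ℕ} {u v : Fin m ⊕ Fin m} : idBr m u v ↔ u.elim id id = v.elim id id := by
  cases u <;> cases v <;> simp [idBr, Fin.val_inj]

lemma splitComp_idBr {α : Type} {m : ℕ} (R : α ⊕ Fin m → α ⊕ Fin m → Prop)
    [Std.Refl R] [IsTrans (α ⊕ Fin m) R] : splitComp R (idBr m) = R := by
  let collapse : α ⊕ (Fin m ⊕ Fin m) → α ⊕ Fin m := Sum.map id (Sum.elim id id)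
  have collapse_embR (u : α ⊕ Fin m) : collapse (embR u) = u := by cases u <;> rfl
  have collapse_embO (u : α ⊕ Fin m) : collapse (embO u) = u := by cases u <;> rfl
  have collapse_embP (u : Fin m ⊕ Fin m) : collapse (embP u) = .inr (u.elim id id) := by
    cases u <;> rfl
  ext x y
  constructor
  · intro h
    have := splitComp_induction (S := R on collapse)
      (fun u v huv => by rwa [onFun, collapse_embR, collapse_embR])
      (fun u v huv => by rw [onFun, collapse_embP, collapse_embP, idBr_iff.1 huv]; exact refl _) h
    rwa [onFun, collapse_embO, collapse_embO] at this
  · intro h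
    have toR : ∀ z : α ⊕ Fin m, ReflTransGen (unionRel R (idBr m)) (embO z) (embR z)
      | .inl _ => .refl
      | .inr b => .single (unionRel_of_right (u := .inr b) (v := .inl b) rfl)
    have ofR : ∀ z : α ⊕ Fin m, ReflTransGen (unionRel R (idBr m)) (embR z) (embO z)
      | .inl _ => .refl
      | .inr b => .single (unionRel_of_right (u := .inl b) (v := .inr b) rfl)
    exact (TransGen.tail' (toR x) (unionRel_of_left h)).trans_left (ofR y)

section Graphs

variable {n : ℕ}

/-- `gDelta n` is the kernel of this map: each class is labelled by its least position in `3n`. -/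
def deltaLabel (n : ℕ) : Fin n ⊕ Fin (3 * n) → ℕ :=
  Sum.elim Fin.val fun b => if (b : ℕ) < 2 * n then b else b - n

lemma gDelta_iff {x y : Fin n ⊕ Fin (3 * n)} : gDelta n x y ↔ deltaLabel n x = deltaLabel n y := by
  constructor
  · rintro (rfl | ⟨m, m', ⟨rfl, rfl⟩ | ⟨rfl, rfl⟩, h⟩ | ⟨m, m', rfl, rfl, hm, hm', h⟩)
    · rfl
    all_goals simp only [deltaLabel, Sum.elim_inl, Sum.elim_inr]; split_ifs <;> omega
  · intro h
    rcases x with m | b <;> rcases y with m' | b' <;>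
      simp only [deltaLabel, Sum.elim_inl, Sum.elim_inr] at h
    · exact .inl (congrArg _ (Fin.ext h))
    · exact .inr (.inl ⟨m, b', .inl ⟨rfl, rfl⟩, by split_ifs at h <;> omega⟩)
    · exact .inr (.inl ⟨m', b, .inr ⟨rfl, rfl⟩, by split_ifs at h <;> omega⟩)
    · by_cases hbb' : b = b'
      · exact .inl (congrArg _ hbb')
      · have := Fin.val_ne_of_ne hbb'
        exact .inr (.inr ⟨b, b', rfl, rfl, by split_ifs at h <;> omega⟩)

instance : Std.Refl (gDelta n) := ⟨fun _ => .inl rfl⟩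

instance : Std.Symm (gDelta n) := ⟨fun _ _ h => gDelta_iff.2 (gDelta_iff.1 h).symm⟩

instance : IsTrans _ (gDelta n) :=
  ⟨fun _ _ _ h₁ h₂ => gDelta_iff.2 ((gDelta_iff.1 h₁).trans (gDelta_iff.1 h₂))⟩

instance : Std.Symm (gSigma n) where
  symm _ _ := by
    rintro (rfl | ⟨m, m', rfl, rfl, hm, hm', h⟩ | ⟨m, v, ⟨rfl, rfl⟩ | ⟨rfl, rfl⟩, h⟩)
    · exact .inl rfl
    · exact .inr (.inl ⟨m', m, rfl, rfl, hm', hm, h.symm⟩)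
    · exact .inr (.inr ⟨m, v, .inr ⟨rfl, rfl⟩, h⟩)
    · exact .inr (.inr ⟨m, v, .inl ⟨rfl, rfl⟩, h⟩)

def strandLabel (n : ℕ) : Fin n ⊕ (Fin (3 * n) ⊕ Fin n) → ℕ :=
  Sum.elim Fin.val (Sum.elim (fun b => b % n) Fin.val)

lemma strandLabel_embR (u : Fin n ⊕ Fin (3 * n)) :
    strandLabel n (embR u) = deltaLabel n u % n := by
  rcases u with m | b
  · exact (Nat.mod_eq_of_lt m.isLt).symm
  · simp only [strandLabel, deltaLabel, embR, Sum.elim_inl, Sum.elim_inr]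
    split_ifs with hb
    · rfl
    · obtain ⟨c, hc⟩ : ∃ c, (b : ℕ) = c + n := ⟨b - n, by omega⟩
      simp [hc]

lemma strandLabel_embP_of_gSigma {u v : Fin (3 * n) ⊕ Fin n} (h : gSigma n u v) :
    strandLabel n (embP u) = strandLabel n (embP v) := by
  rcases h with rfl | ⟨m, m', rfl, rfl, -, -, h | h⟩ | ⟨m, v, ⟨rfl, rfl⟩ | ⟨rfl, rfl⟩, -, h⟩
  · rfl
  all_goals simp [strandLabel, embP, h, Nat.mod_eq_of_lt]

lemma splitComp_gDelta_gSigma_inl_inr {m v : Fin n} (h : (m : ℕ) = v) :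
    splitComp (gDelta n) (gSigma n) (.inl m) (.inr v) := by
  let b₀ : Fin (3 * n) := ⟨m, by omega⟩
  let b₁ : Fin (3 * n) := ⟨m + n, by omega⟩
  let b₂ : Fin (3 * n) := ⟨m + 2 * n, by omega⟩
  have enter : gDelta n (.inl m) (.inr b₀) := gDelta_iff.2 (by simp [deltaLabel, b₀]; omega)
  have cup : gSigma n (.inl b₀) (.inl b₁) :=
    .inr (.inl ⟨b₀, b₁, rfl, rfl, by simp [b₀, b₁]; omega⟩)
  have cap : gDelta n (.inr b₁) (.inr b₂) := gDelta_iff.2 <| by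
    simp only [deltaLabel, Sum.elim_inr, b₁, b₂]; split_ifs <;> omega
  have exit : gSigma n (.inl b₂) (.inr v) :=
    .inr (.inr ⟨b₂, v, .inl ⟨rfl, rfl⟩, by simp [b₂]; omega⟩)
  exact .head (unionRel_of_left enter) <| .head (unionRel_of_right cup) <|
    .head (unionRel_of_left cap) <| .single (unionRel_of_right exit)

lemma splitComp_gDelta_gSigma : splitComp (gDelta n) (gSigma n) = idBr n := by
  ext x y
  constructor
  · intro h
    have := splitComp_induction (S := Eq on strandLabel n)
      (fun u v huv => by simp only [onFun, strandLabel_embR, gDelta_iff.1 huv])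
      (fun _ _ => strandLabel_embP_of_gSigma) h
    cases x <;> cases y <;> exact this
  · intro h
    rcases x with m | v <;> rcases y with m' | v'
    · obtain rfl : m = m' := Fin.ext h
      exact .single (unionRel_of_left (u := .inl m) (v := .inl m) (refl _))
    · exact splitComp_gDelta_gSigma_inl_inr h
    · exact symm (splitComp_gDelta_gSigma_inl_inr h.symm)
    · obtain rfl : v = v' := Fin.ext h
      exact .single (unionRel_of_right (u := .inr v) (v := .inr v) (.inl rfl))

end Graphs

/-- G(Σ∨_{A,A}) ∗ G(d_{A,¬A,A}) ∗ G(Δ∧_{A,A}) = 1_{G A} in Br,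
where G(d) is the identity split equivalence on 3n. -/
theorem sigma_delta_identity (n : ℕ) :
    ∀ x y, splitComp (splitComp (gDelta n) (idBr (3 * n))) (gSigma n) x y ↔
      idBr n x y := by
  intro x y
  rw [splitComp_idBr, splitComp_gDelta_gSigma]
end

section
/- Let G be the functor from formulae of L_{∧,∨} to finite ordinals given by letter-counting, extended to arrow terms so that G(f ∘ g) = Gf ∗ Gg and G(f ξ g) = Gf ∪ (Gg shifted by (G of the sources/targets of f)). Then for arrow terms f : A ⊢ D and g : B ⊢ E, the shifted union G(f ξ g) = Gf ∪ Gg^{+GA}_{+GD} (where Gg^{+GA}_{+GD} shifts all source indices by GA and target indices by GD) is again a Brauerian split equivalence from GA + GB to GD + GE, and this operation is functorial: G((g₁ ∘ f₁) ξ (g₂ ∘ f₂)) = G((g₁ ξ g₂) ∘ (f₁ ξ f₂)) as Brauerian split equivalences. -/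
open Sum

/-- Embedding of the first summand for the shifted disjoint union. -/
def embL {m n m' n' : ℕ} : Fin m ⊕ Fin n → Fin (m + m') ⊕ Fin (n + n')
  | inl a => inl (Fin.castAdd m' a)
  | inr b => inr (Fin.castAdd n' b)

/-- Embedding of the second summand (shifted by m on sources and n on targets). -/
def embShift {m n m' n' : ℕ} : Fin m' ⊕ Fin n' → Fin (m + m') ⊕ Fin (n + n')
  | inl a => inl (Fin.natAdd m a)
  | inr b => inr (Fin.natAdd n b)

/-- The shifted disjoint union (tensor) R ⊕ P : m + m' ⊢ n + n' of split
relations R : m ⊢ n and P : m' ⊢ n'. -/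
def oplus {m n m' n' : ℕ} (R : Fin m ⊕ Fin n → Fin m ⊕ Fin n → Prop)
    (P : Fin m' ⊕ Fin n' → Fin m' ⊕ Fin n' → Prop)
    (x y : Fin (m + m') ⊕ Fin (n + n')) : Prop :=
  (∃ u v, embL (m' := m') (n' := n') u = x ∧ embL (m' := m') (n' := n') v = y ∧ R u v) ∨
  (∃ u v, embShift (m := m) (n := n) u = x ∧ embShift (m := m) (n := n) v = y ∧ P u v)


/-! ### Auxiliary lemmas -/

section Aux

open Relation

/-- Transport of being Brauerian along an equivalence of carriers. -/
theorem isBrauerian_congr {σ τ : Type} (e : σ ≃ τ) {R : σ → σ → Prop} {S : τ → τ → Prop}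
    (hc : ∀ a b, S (e a) (e b) ↔ R a b) (h : IsBrauerian R) : IsBrauerian S := by
  obtain ⟨⟨hr, hs, ht⟩, hp⟩ := h
  constructor
  · constructor
    · intro x
      have := (hc (e.symm x) (e.symm x)).mpr (hr _)
      simpa using this
    · intro x y hxy
      have h1 : S (e (e.symm x)) (e (e.symm y)) := by simpa using hxy
      have := (hc _ _).mpr (hs ((hc _ _).mp h1))
      simpa using this
    · intro x y z hxy hyz
      have h1 : S (e (e.symm x)) (e (e.symm y)) := by simpa using hxy
      have h2 : S (e (e.symm y)) (e (e.symm z)) := by simpa using hyz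
      have := (hc _ _).mpr (ht ((hc _ _).mp h1) ((hc _ _).mp h2))
      simpa using this
  · intro u
    obtain ⟨v, hne, huv, huniq⟩ := hp (e.symm u)
    refine ⟨e v, ?_, ?_, ?_⟩
    · intro h
      apply hne
      apply e.injective
      simpa using h
    · have := (hc _ _).mpr huv
      simpa using this
    · intro w hw
      have h1 : S (e (e.symm u)) (e (e.symm w)) := by simpa using hw
      rcases huniq _ ((hc _ _).mp h1) with h | h
      · left; have := congrArg e h; simpa using this
      · right; have := congrArg e h; simpa using this

/-- The pointwise disjoint sum of Brauerian relations is Brauerian. -/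
theorem liftRel_brauerian {α β : Type} {R : α → α → Prop} {P : β → β → Prop}
    (hR : IsBrauerian R) (hP : IsBrauerian P) : IsBrauerian (Sum.LiftRel R P) := by
  obtain ⟨eR, pR⟩ := hR
  obtain ⟨eP, pP⟩ := hP
  constructor
  · constructor
    · rintro (a | b)
      · exact .inl (eR.refl a)
      · exact .inr (eP.refl b)
    · rintro _ _ (h | h)
      · exact .inl (eR.symm h)
      · exact .inr (eP.symm h)
    · rintro _ _ z h1 h2
      cases h1 with
      | inl h1 =>
        cases h2 with
        | inl h2 => exact .inl (eR.trans h1 h2)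
      | inr h1 =>
        cases h2 with
        | inr h2 => exact .inr (eP.trans h1 h2)
  · rintro (a | b)
    · obtain ⟨v, hne, huv, hu⟩ := pR a
      refine ⟨inl v, by simpa using hne, .inl huv, ?_⟩
      rintro w hw
      cases hw with
      | inl h =>
        rcases hu _ h with rfl | rfl
        · exact Or.inl rfl
        · exact Or.inr rfl
    · obtain ⟨v, hne, huv, hu⟩ := pP b
      refine ⟨inr v, by simpa using hne, .inr huv, ?_⟩
      rintro w hw
      cases hw with
      | inr h =>
        rcases hu _ h with rfl | rfl
        · exact Or.inl rfl
        · exact Or.inr rfl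

/-- Transitive closure transports along an equivalence of carriers. -/
theorem transGen_congr {σ τ : Type} (e : σ ≃ τ) {R : σ → σ → Prop} {S : τ → τ → Prop}
    (hc : ∀ a b, S (e a) (e b) ↔ R a b) (a b : σ) :
    Relation.TransGen S (e a) (e b) ↔ Relation.TransGen R a b := by
  constructor
  · intro h
    have key : ∀ x y, Relation.TransGen S x y → Relation.TransGen R (e.symm x) (e.symm y) := by
      intro x y h
      induction h with
      | single h => exact .single ((hc _ _).mp (by simpa using h))
      | tail _ h ih => exact ih.tail ((hc _ _).mp (by simpa using h))
    simpa using key _ _ h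
  · intro h
    induction h with
    | single h => exact .single ((hc _ _).mpr h)
    | tail _ h ih => exact ih.tail ((hc _ _).mpr h)

/-- Transitive closure of a disjoint sum of relations is the disjoint sum of the
transitive closures. -/
theorem transGen_liftRel {α β : Type} {A : α → α → Prop} {B : β → β → Prop} (x y : α ⊕ β) :
    Relation.TransGen (Sum.LiftRel A B) x y ↔
      Sum.LiftRel (Relation.TransGen A) (Relation.TransGen B) x y := by
  constructor
  · intro h
    induction h with
    | single h =>
      cases h with
      | inl h => exact .inl (.single h)
      | inr h => exact .inr (.single h)
    | tail _ h ih =>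
      cases ih with
      | inl h1 =>
        cases h with
        | inl h2 => exact .inl (h1.tail h2)
      | inr h1 =>
        cases h with
        | inr h2 => exact .inr (h1.tail h2)
  · intro h
    cases h with
    | inl h =>
      induction h with
      | single h => exact .single (.inl h)
      | tail _ h ih => exact ih.tail (.inl h)
    | inr h =>
      induction h with
      | single h => exact .single (.inr h)
      | tail _ h ih => exact ih.tail (.inr h)

/-- The equivalence realizing the carrier of a shifted disjoint union. -/
def eB (m n m' n' : ℕ) : (Fin m ⊕ Fin n) ⊕ (Fin m' ⊕ Fin n') ≃ Fin (m + m') ⊕ Fin (n + n') :=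
  (Equiv.sumSumSumComm (Fin m) (Fin n) (Fin m') (Fin n')).trans
    (Equiv.sumCongr finSumFinEquiv finSumFinEquiv)

theorem eB_inl {m n m' n' : ℕ} (u : Fin m ⊕ Fin n) :
    eB m n m' n' (inl u) = embL (m' := m') (n' := n') u := by
  cases u <;> rfl

theorem eB_inr {m n m' n' : ℕ} (u : Fin m' ⊕ Fin n') :
    eB m n m' n' (inr u) = embShift (m := m) (n := n) u := by
  cases u <;> rfl

/-- `oplus` corresponds to `Sum.LiftRel` along `eB`. -/
theorem oplus_compat {m n m' n' : ℕ} (f : Fin m ⊕ Fin n → Fin m ⊕ Fin n → Prop)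
    (P : Fin m' ⊕ Fin n' → Fin m' ⊕ Fin n' → Prop)
    (a b : (Fin m ⊕ Fin n) ⊕ (Fin m' ⊕ Fin n')) :
    oplus f P (eB m n m' n' a) (eB m n m' n' b) ↔ Sum.LiftRel f P a b := by
  constructor
  · rintro (⟨u, v, hu, hv, h⟩ | ⟨u, v, hu, hv, h⟩)
    · rw [← eB_inl] at hu hv
      obtain rfl := (eB m n m' n').injective hu
      obtain rfl := (eB m n m' n').injective hv
      exact .inl h
    · rw [← eB_inr] at hu hv
      obtain rfl := (eB m n m' n').injective hu
      obtain rfl := (eB m n m' n').injective hv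
      exact .inr h
  · rintro (h | h)
    · exact Or.inl ⟨_, _, (eB_inl _).symm, (eB_inl _).symm, h⟩
    · exact Or.inr ⟨_, _, (eB_inr _).symm, (eB_inr _).symm, h⟩

/-- The equivalence realizing the three-part carrier of a composite of tensors. -/
def e3 (m n k m' n' k' : ℕ) :
    (Fin m ⊕ (Fin n ⊕ Fin k)) ⊕ (Fin m' ⊕ (Fin n' ⊕ Fin k')) ≃
      Fin (m + m') ⊕ (Fin (n + n') ⊕ Fin (k + k')) :=
  (Equiv.sumSumSumComm (Fin m) (Fin n ⊕ Fin k) (Fin m') (Fin n' ⊕ Fin k')).trans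
    (Equiv.sumCongr finSumFinEquiv (eB n k n' k'))

theorem embR_eB {m n k m' n' k' : ℕ} (w : (Fin m ⊕ Fin n) ⊕ (Fin m' ⊕ Fin n')) :
    embR (γ := Fin (k + k')) (eB m n m' n' w) =
      e3 m n k m' n' k' (Sum.map embR embR w) := by
  rcases w with (a | b) | (a | b) <;> rfl

theorem embP_eB {m n k m' n' k' : ℕ} (w : (Fin n ⊕ Fin k) ⊕ (Fin n' ⊕ Fin k')) :
    embP (α := Fin (m + m')) (eB n k n' k' w) =
      e3 m n k m' n' k' (Sum.map embP embP w) := by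
  rcases w with (a | b) | (a | b) <;> rfl

theorem embO_eB {m n k m' n' k' : ℕ} (w : (Fin m ⊕ Fin k) ⊕ (Fin m' ⊕ Fin k')) :
    embO (β := Fin (n + n')) (eB m k m' k' w) =
      e3 m n k m' n' k' (Sum.map embO embO w) := by
  rcases w with (a | b) | (a | b) <;> rfl

/-- `unionRel` of tensors corresponds to the disjoint sum of `unionRel`s along `e3`. -/
theorem unionRel_compat {m n k m' n' k' : ℕ}
    (f₁ : Fin m ⊕ Fin n → Fin m ⊕ Fin n → Prop)
    (g₁ : Fin n ⊕ Fin k → Fin n ⊕ Fin k → Prop)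
    (f₂ : Fin m' ⊕ Fin n' → Fin m' ⊕ Fin n' → Prop)
    (g₂ : Fin n' ⊕ Fin k' → Fin n' ⊕ Fin k' → Prop)
    (a b : (Fin m ⊕ (Fin n ⊕ Fin k)) ⊕ (Fin m' ⊕ (Fin n' ⊕ Fin k'))) :
    unionRel (oplus f₁ f₂) (oplus g₁ g₂) (e3 m n k m' n' k' a) (e3 m n k m' n' k' b) ↔
      Sum.LiftRel (unionRel f₁ g₁) (unionRel f₂ g₂) a b := by
  constructor
  · rintro (⟨u, v, hu, hv, h⟩ | ⟨u, v, hu, hv, h⟩)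
    · obtain ⟨u', rfl⟩ := (eB m n m' n').surjective u
      obtain ⟨v', rfl⟩ := (eB m n m' n').surjective v
      rw [embR_eB] at hu hv
      obtain rfl := (e3 m n k m' n' k').injective hu
      obtain rfl := (e3 m n k m' n' k').injective hv
      cases (oplus_compat f₁ f₂ u' v').mp h with
      | inl h1 => exact .inl (Or.inl ⟨_, _, rfl, rfl, h1⟩)
      | inr h1 => exact .inr (Or.inl ⟨_, _, rfl, rfl, h1⟩)
    · obtain ⟨u', rfl⟩ := (eB n k n' k').surjective u
      obtain ⟨v', rfl⟩ := (eB n k n' k').surjective v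
      rw [embP_eB (m := m) (m' := m')] at hu hv
      obtain rfl := (e3 m n k m' n' k').injective hu
      obtain rfl := (e3 m n k m' n' k').injective hv
      cases (oplus_compat g₁ g₂ u' v').mp h with
      | inl h1 => exact .inl (Or.inr ⟨_, _, rfl, rfl, h1⟩)
      | inr h1 => exact .inr (Or.inr ⟨_, _, rfl, rfl, h1⟩)
  · rintro (h | h)
    · rcases h with ⟨u, v, hu, hv, h⟩ | ⟨u, v, hu, hv, h⟩
      · refine Or.inl ⟨eB m n m' n' (inl u), eB m n m' n' (inl v), ?_, ?_,
          (oplus_compat f₁ f₂ _ _).mpr (.inl h)⟩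
        · rw [embR_eB]; subst hu; rfl
        · rw [embR_eB]; subst hv; rfl
      · refine Or.inr ⟨eB n k n' k' (inl u), eB n k n' k' (inl v), ?_, ?_,
          (oplus_compat g₁ g₂ _ _).mpr (.inl h)⟩
        · rw [embP_eB (m := m) (m' := m')]; subst hu; rfl
        · rw [embP_eB (m := m) (m' := m')]; subst hv; rfl
    · rcases h with ⟨u, v, hu, hv, h⟩ | ⟨u, v, hu, hv, h⟩
      · refine Or.inl ⟨eB m n m' n' (inr u), eB m n m' n' (inr v), ?_, ?_,
          (oplus_compat f₁ f₂ _ _).mpr (.inr h)⟩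
        · rw [embR_eB]; subst hu; rfl
        · rw [embR_eB]; subst hv; rfl
      · refine Or.inr ⟨eB n k n' k' (inr u), eB n k n' k' (inr v), ?_, ?_,
          (oplus_compat g₁ g₂ _ _).mpr (.inr h)⟩
        · rw [embP_eB (m := m) (m' := m')]; subst hu; rfl
        · rw [embP_eB (m := m) (m' := m')]; subst hv; rfl

end Aux

/-- the shifted disjoint union of Brauerian split equivalences is
a Brauerian split equivalence, and the operation is functorial:
(Gg₁ ∗ Gf₁) ⊕ (Gg₂ ∗ Gf₂) = (Gg₁ ⊕ Gg₂) ∗ (Gf₁ ⊕ Gf₂). -/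
theorem oplus_brauerian_functorial {m n k m' n' k' : ℕ}
    (f₁ : Fin m ⊕ Fin n → Fin m ⊕ Fin n → Prop)
    (g₁ : Fin n ⊕ Fin k → Fin n ⊕ Fin k → Prop)
    (f₂ : Fin m' ⊕ Fin n' → Fin m' ⊕ Fin n' → Prop)
    (g₂ : Fin n' ⊕ Fin k' → Fin n' ⊕ Fin k' → Prop)
    (hf₁ : IsBrauerian f₁) (hg₁ : IsBrauerian g₁)
    (hf₂ : IsBrauerian f₂) (hg₂ : IsBrauerian g₂) :
    IsBrauerian (oplus f₁ f₂) ∧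
    (∀ x y, oplus (splitComp f₁ g₁) (splitComp f₂ g₂) x y ↔
      splitComp (oplus f₁ f₂) (oplus g₁ g₂) x y) := by
  constructor
  · exact isBrauerian_congr (eB m n m' n') (oplus_compat f₁ f₂) (liftRel_brauerian hf₁ hf₂)
  · intro x y
    obtain ⟨a, rfl⟩ := (eB m k m' k').surjective x
    obtain ⟨b, rfl⟩ := (eB m k m' k').surjective y
    rw [oplus_compat]
    show _ ↔ Relation.TransGen _ _ _
    rw [embO_eB (n := n) (n' := n'), embO_eB (n := n) (n' := n'),
      transGen_congr (e3 m n k m' n' k') (unionRel_compat f₁ g₁ f₂ g₂),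
      transGen_liftRel]
    rcases a with a₁ | a₂ <;> rcases b with b₁ | b₂ <;>
      simp [Sum.map, splitComp, unionRel]
end

section
/- The disjoint-union (tensor) operation on Brauerian split equivalences, sending R : m ⊢ n and P : m' ⊢ n' to R ⊕ P : m + m' ⊢ n + n' (with P's indices shifted by m on sources and n on targets), together with the 'block swap' Brauerian split equivalence σ_{m,n} : m + n ⊢ n + m consisting of the transversals pairing k < m with k + n and pairing m ≤ k < m + n with k − m, makes Br a symmetric monoidal category: σ_{n,m} ∗ σ_{m,n} = 1_{m+n} and σ is natural: (P ⊕ R) ∗ σ_{m,m'} = σ_{n,n'} ∗ (R ⊕ P) for all R : m ⊢ n, P : m' ⊢ n'. -/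
open Sum

/-- The block swap σ_{m,n} : m + n ⊢ n + m, whose classes are the transversals
pairing k < m with k + n and pairing m ≤ k < m + n with k − m. -/
def blockSwap (m n : ℕ) (x y : Fin (m + n) ⊕ Fin (n + m)) : Prop :=
  x = y ∨
  (∃ (k : Fin (m + n)) (l : Fin (n + m)),
    ((x = inl k ∧ y = inr l) ∨ (x = inr l ∧ y = inl k)) ∧
    (((k : ℕ) < m ∧ (l : ℕ) = (k : ℕ) + n) ∨
     (m ≤ (k : ℕ) ∧ (l : ℕ) = (k : ℕ) - m)))

section AuxBr

open Relation

/-- Graph of a function f : α → β as a split relation on α ⊕ β. -/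
def graphRel {α β : Type} (f : α → β) (x y : α ⊕ β) : Prop :=
  x = y ∨ ∃ a, (x = inl a ∧ y = inr (f a)) ∨ (y = inl a ∧ x = inr (f a))

theorem graphRel_equiv {α β : Type} (f : α → β) (fi : β → α)
    (hfi : ∀ a, fi (f a) = a) :
    Equivalence (graphRel f) where
  refl x := Or.inl rfl
  symm := by
    rintro x y (rfl | ⟨a, h⟩)
    · exact Or.inl rfl
    · exact Or.inr ⟨a, h.symm⟩
  trans := by
    rintro x y z (rfl | ⟨a, (⟨rfl, rfl⟩ | ⟨rfl, rfl⟩)⟩) hyz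
    · exact hyz
    · rcases hyz with rfl | ⟨b, (⟨h1, h2⟩ | ⟨h1, h2⟩)⟩
      · exact Or.inr ⟨a, Or.inl ⟨rfl, rfl⟩⟩
      · exact absurd h1 (by simp)
      · have hab : a = b := by
          have := congrArg fi (inr.inj h2)
          simpa [hfi] using this
        subst h1
        exact Or.inl (by rw [hab])
    · rcases hyz with rfl | ⟨b, (⟨h1, h2⟩ | ⟨h1, h2⟩)⟩
      · exact Or.inr ⟨a, Or.inr ⟨rfl, rfl⟩⟩
      · have hab : a = b := inl.inj h1
        subst h2
        exact Or.inl (by rw [hab])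
      · exact absurd h2 (by simp)

theorem graphRel_brauerian {α β : Type} (f : α → β) (fi : β → α)
    (hfi : ∀ a, fi (f a) = a) (hif : ∀ b, f (fi b) = b) :
    IsBrauerian (graphRel f) := by
  refine ⟨graphRel_equiv f fi hfi, ?_⟩
  rintro (a | b)
  · refine ⟨inr (f a), by simp, Or.inr ⟨a, Or.inl ⟨rfl, rfl⟩⟩, ?_⟩
    rintro w (rfl | ⟨a', (⟨h1, h2⟩ | ⟨h1, h2⟩)⟩)
    · exact Or.inl rfl
    · cases inl.inj h1; exact Or.inr h2
    · exact absurd h2 (by simp)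
  · refine ⟨inl (fi b), by simp, ?_, ?_⟩
    · exact Or.inr ⟨fi b, Or.inr ⟨rfl, by rw [hif]⟩⟩
    · rintro w (rfl | ⟨a', (⟨h1, h2⟩ | ⟨h1, h2⟩)⟩)
      · exact Or.inl rfl
      · exact absurd h1 (by simp)
      · have : a' = fi b := by
          have := congrArg fi (inr.inj h2)
          simpa [hfi] using this.symm
        exact Or.inr (by rw [h1, this])

/-- Composing a graph relation on the left with an equivalence. -/
theorem splitComp_graph_left {α β γ : Type} (f : α → β)
    (Q : β ⊕ γ → β ⊕ γ → Prop) (hQ : Equivalence Q) (x y : α ⊕ γ) :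
    splitComp (graphRel f) Q x y ↔ Q (Sum.map f id x) (Sum.map f id y) := by
  set hmap : α ⊕ (β ⊕ γ) → β ⊕ γ := Sum.elim (fun a => inl (f a)) id with hm
  have hO : ∀ z : α ⊕ γ, hmap (embO (β := β) z) = Sum.map f id z := by
    rintro (a | c) <;> rfl
  constructor
  · intro h
    have key : ∀ u v, unionRel (graphRel f) Q u v → Q (hmap u) (hmap v) := by
      rintro u v (⟨u', v', rfl, rfl, hr⟩ | ⟨u', v', rfl, rfl, hq⟩)
      · rcases hr with rfl | ⟨a, (⟨rfl, rfl⟩ | ⟨rfl, rfl⟩)⟩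
        · exact hQ.refl _
        · exact hQ.refl _
        · exact hQ.refl _
      · have e : ∀ w : β ⊕ γ, hmap (embP (α := α) w) = w := by rintro (b | c) <;> rfl
        rw [e, e]; exact hq
    have main : ∀ u v, Relation.TransGen (unionRel (graphRel f) Q) u v →
        Q (hmap u) (hmap v) := by
      intro u v h
      induction h with
      | single h => exact key _ _ h
      | tail _ h2 ih => exact hQ.trans ih (key _ _ h2)
    have := main _ _ h
    rwa [hO, hO] at this
  · intro h
    have pre : ∀ z : α ⊕ γ, Relation.ReflTransGen (unionRel (graphRel f) Q)
        (embO (β := β) z) (embP (α := α) (Sum.map f id z)) := by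
      rintro (a | c)
      · exact ReflTransGen.single
          (Or.inl ⟨inl a, inr (f a), rfl, rfl, Or.inr ⟨a, Or.inl ⟨rfl, rfl⟩⟩⟩)
      · exact ReflTransGen.refl
    have post : ∀ z : α ⊕ γ, Relation.ReflTransGen (unionRel (graphRel f) Q)
        (embP (α := α) (Sum.map f id z)) (embO (β := β) z) := by
      rintro (a | c)
      · exact ReflTransGen.single
          (Or.inl ⟨inr (f a), inl a, rfl, rfl, Or.inr ⟨a, Or.inr ⟨rfl, rfl⟩⟩⟩)
      · exact ReflTransGen.refl
    have mid : unionRel (graphRel f) Q (embP (α := α) (Sum.map f id x))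
        (embP (α := α) (Sum.map f id y)) := Or.inr ⟨_, _, rfl, rfl, h⟩
    exact (Relation.TransGen.tail' (pre x) mid).trans_left (post y)

/-- Composing a graph relation (of a bijection) on the right with an equivalence. -/
theorem splitComp_graph_right {α β γ : Type} (f : β → γ) (fi : γ → β)
    (hfi : ∀ b, fi (f b) = b) (hif : ∀ c, f (fi c) = c)
    (Q : α ⊕ β → α ⊕ β → Prop) (hQ : Equivalence Q) (x y : α ⊕ γ) :
    splitComp Q (graphRel f) x y ↔ Q (Sum.map id fi x) (Sum.map id fi y) := by
  set hmap : α ⊕ (β ⊕ γ) → α ⊕ β :=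
    Sum.elim inl (Sum.elim inr (fun c => inr (fi c))) with hm
  have hO : ∀ z : α ⊕ γ, hmap (embO (β := β) z) = Sum.map id fi z := by
    rintro (a | c) <;> rfl
  constructor
  · intro h
    have key : ∀ u v, unionRel Q (graphRel f) u v → Q (hmap u) (hmap v) := by
      rintro u v (⟨u', v', rfl, rfl, hq⟩ | ⟨u', v', rfl, rfl, hr⟩)
      · have e : ∀ w : α ⊕ β, hmap (embR (γ := γ) w) = w := by rintro (a | b) <;> rfl
        rw [e, e]; exact hq
      · rcases hr with rfl | ⟨b, (⟨rfl, rfl⟩ | ⟨rfl, rfl⟩)⟩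
        · exact hQ.refl _
        · show Q (inr b) (inr (fi (f b)))
          rw [hfi]; exact hQ.refl _
        · show Q (inr (fi (f b))) (inr b)
          rw [hfi]; exact hQ.refl _
    have main : ∀ u v, Relation.TransGen (unionRel Q (graphRel f)) u v →
        Q (hmap u) (hmap v) := by
      intro u v h
      induction h with
      | single h => exact key _ _ h
      | tail _ h2 ih => exact hQ.trans ih (key _ _ h2)
    have := main _ _ h
    rwa [hO, hO] at this
  · intro h
    have pre : ∀ z : α ⊕ γ, Relation.ReflTransGen (unionRel Q (graphRel f))
        (embO (β := β) z) (embR (γ := γ) (Sum.map id fi z)) := by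
      rintro (a | c)
      · exact ReflTransGen.refl
      · exact ReflTransGen.single
          (Or.inr ⟨inr c, inl (fi c), rfl, rfl, Or.inr ⟨fi c, Or.inr ⟨rfl, by rw [hif]⟩⟩⟩)
    have post : ∀ z : α ⊕ γ, Relation.ReflTransGen (unionRel Q (graphRel f))
        (embR (γ := γ) (Sum.map id fi z)) (embO (β := β) z) := by
      rintro (a | c)
      · exact ReflTransGen.refl
      · exact ReflTransGen.single
          (Or.inr ⟨inl (fi c), inr c, rfl, rfl, Or.inr ⟨fi c, Or.inl ⟨rfl, by rw [hif]⟩⟩⟩)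
    have mid : unionRel Q (graphRel f) (embR (γ := γ) (Sum.map id fi x))
        (embR (γ := γ) (Sum.map id fi y)) := Or.inl ⟨_, _, rfl, rfl, h⟩
    exact (Relation.TransGen.tail' (pre x) mid).trans_left (post y)

/-- The underlying bijection of the block swap. -/
def sfun (m n : ℕ) (k : Fin (m + n)) : Fin (n + m) :=
  if h : (k : ℕ) < m then ⟨(k : ℕ) + n, by omega⟩
  else ⟨(k : ℕ) - m, by have := k.isLt; omega⟩

theorem sfun_sfun (m n : ℕ) (k : Fin (m + n)) : sfun n m (sfun m n k) = k := by
  have hk := k.isLt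
  apply Fin.ext
  rcases lt_or_ge (k : ℕ) m with h | h
  · have e1 : ((sfun m n k) : ℕ) = (k : ℕ) + n := by rw [sfun, dif_pos h]
    rw [sfun]
    split <;> simp <;> omega
  · have e1 : ((sfun m n k) : ℕ) = (k : ℕ) - m := by rw [sfun, dif_neg (by omega)]
    rw [sfun]
    split <;> simp <;> omega

theorem sfun_val (m n : ℕ) (k : Fin (m + n)) (l : Fin (n + m)) :
    ((k : ℕ) < m ∧ (l : ℕ) = (k : ℕ) + n) ∨ (m ≤ (k : ℕ) ∧ (l : ℕ) = (k : ℕ) - m) ↔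
    l = sfun m n k := by
  have hk := k.isLt
  have hl := l.isLt
  unfold sfun
  constructor
  · rintro (⟨h1, h2⟩ | ⟨h1, h2⟩) <;> (apply Fin.ext; split <;> simp_all <;> omega)
  · rintro rfl
    split
    · exact Or.inl ⟨by assumption, rfl⟩
    · exact Or.inr ⟨by omega, rfl⟩

theorem blockSwap_eq_graph (m n : ℕ) : blockSwap m n = graphRel (sfun m n) := by
  funext x y
  apply propext
  constructor
  · rintro (rfl | ⟨k, l, hp, hc⟩)
    · exact Or.inl rfl
    · rw [sfun_val] at hc
      subst hc
      exact Or.inr ⟨k, hp.imp id And.symm⟩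
  · rintro (rfl | ⟨a, hp⟩)
    · exact Or.inl rfl
    · exact Or.inr ⟨a, sfun m n a, hp.imp id And.symm, (sfun_val m n a _).mpr rfl⟩

end AuxBr

section AuxBr2

theorem embL_inj {m n m' n' : ℕ} {u v : Fin m ⊕ Fin n}
    (h : embL (m' := m') (n' := n') u = embL (m' := m') (n' := n') v) : u = v := by
  rcases u with a | b <;> rcases v with a' | b' <;> simp [embL] at h <;> simp [h]

theorem embShift_inj {m n m' n' : ℕ} {u v : Fin m' ⊕ Fin n'}
    (h : embShift (m := m) (n := n) u = embShift (m := m) (n := n) v) : u = v := by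
  rcases u with a | b <;> rcases v with a' | b' <;> simp [embShift, Fin.ext_iff] at h <;> simp [Fin.ext_iff] <;> omega

theorem embL_ne_embShift {m n m' n' : ℕ} (u : Fin m ⊕ Fin n) (v : Fin m' ⊕ Fin n') :
    embL (m' := m') (n' := n') u ≠ embShift (m := m) (n := n) v := by
  rcases u with a | b <;> rcases v with a' | b' <;>
    simp [embL, embShift, Fin.ext_iff] <;> (intro h; omega)

theorem emb_surj {m n m' n' : ℕ} (x : Fin (m + m') ⊕ Fin (n + n')) :
    (∃ u : Fin m ⊕ Fin n, embL (m' := m') (n' := n') u = x) ∨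
    (∃ u : Fin m' ⊕ Fin n', embShift (m := m) (n := n) u = x) := by
  rcases x with k | k
  · rcases Nat.lt_or_ge (k : ℕ) m with h | h
    · exact Or.inl ⟨inl ⟨(k : ℕ), h⟩, by simp [embL, Fin.ext_iff]⟩
    · refine Or.inr ⟨inl ⟨(k : ℕ) - m, by have := k.isLt; omega⟩, ?_⟩
      simp [embShift, Fin.ext_iff]; omega
  · rcases Nat.lt_or_ge (k : ℕ) n with h | h
    · exact Or.inl ⟨inr ⟨(k : ℕ), h⟩, by simp [embL, Fin.ext_iff]⟩
    · refine Or.inr ⟨inr ⟨(k : ℕ) - n, by have := k.isLt; omega⟩, ?_⟩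
      simp [embShift, Fin.ext_iff]; omega

theorem oplus_equiv {m n m' n' : ℕ} {R : Fin m ⊕ Fin n → Fin m ⊕ Fin n → Prop}
    {P : Fin m' ⊕ Fin n' → Fin m' ⊕ Fin n' → Prop}
    (hR : Equivalence R) (hP : Equivalence P) : Equivalence (oplus R P) where
  refl x := by
    rcases emb_surj x with ⟨u, rfl⟩ | ⟨u, rfl⟩
    · exact Or.inl ⟨u, u, rfl, rfl, hR.refl u⟩
    · exact Or.inr ⟨u, u, rfl, rfl, hP.refl u⟩
  symm := by
    rintro x y (⟨u, v, rfl, rfl, h⟩ | ⟨u, v, rfl, rfl, h⟩)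
    · exact Or.inl ⟨v, u, rfl, rfl, hR.symm h⟩
    · exact Or.inr ⟨v, u, rfl, rfl, hP.symm h⟩
  trans := by
    rintro x y z (⟨u, v, rfl, rfl, h⟩ | ⟨u, v, rfl, rfl, h⟩)
        (⟨u', v', hu', rfl, h'⟩ | ⟨u', v', hu', rfl, h'⟩)
    · cases embL_inj hu'
      exact Or.inl ⟨u, v', rfl, rfl, hR.trans h h'⟩
    · exact absurd hu'.symm (embL_ne_embShift v u')
    · exact absurd hu' (embL_ne_embShift u' v)
    · cases embShift_inj hu'
      exact Or.inr ⟨u, v', rfl, rfl, hP.trans h h'⟩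

theorem sfun_castAdd {a b : ℕ} (x : Fin a) :
    sfun a b (Fin.castAdd b x) = Fin.natAdd b x := by
  apply Fin.ext
  rw [sfun, dif_pos (by simpa using x.isLt)]
  simp [Nat.add_comm]

theorem sfun_natAdd {a b : ℕ} (x : Fin b) :
    sfun a b (Fin.natAdd a x) = Fin.castAdd a x := by
  apply Fin.ext
  rw [sfun, dif_neg (by simp)]
  simp

theorem oplus_swap_mp {m n m' n' : ℕ} {R : Fin m ⊕ Fin n → Fin m ⊕ Fin n → Prop}
    {P : Fin m' ⊕ Fin n' → Fin m' ⊕ Fin n' → Prop}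
    (u v : Fin (m' + m) ⊕ Fin (n' + n)) (h : oplus P R u v) :
    oplus R P (Sum.map (sfun m' m) (sfun n' n) u) (Sum.map (sfun m' m) (sfun n' n) v) := by
  have c1 : ∀ w : Fin m' ⊕ Fin n',
      Sum.map (sfun m' m) (sfun n' n) (embL (m' := m) (n' := n) w)
        = embShift (m := m) (n := n) w := by
    rintro (a | b) <;> simp [embL, embShift, sfun_castAdd]
  have c2 : ∀ w : Fin m ⊕ Fin n,
      Sum.map (sfun m' m) (sfun n' n) (embShift (m := m') (n := n') w)
        = embL (m' := m') (n' := n') w := by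
    rintro (a | b) <;> simp [embL, embShift, sfun_natAdd]
  rcases h with ⟨a, b, rfl, rfl, h⟩ | ⟨a, b, rfl, rfl, h⟩
  · exact Or.inr ⟨a, b, (c1 a).symm, (c1 b).symm, h⟩
  · exact Or.inl ⟨a, b, (c2 a).symm, (c2 b).symm, h⟩

theorem sum_map_sfun_sfun {a b c d : ℕ} (z : Fin (a + b) ⊕ Fin (c + d)) :
    Sum.map (sfun b a) (sfun d c) (Sum.map (sfun a b) (sfun c d) z) = z := by
  rcases z with k | k <;> simp [sfun_sfun]

theorem oplus_swap {m n m' n' : ℕ} {R : Fin m ⊕ Fin n → Fin m ⊕ Fin n → Prop}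
    {P : Fin m' ⊕ Fin n' → Fin m' ⊕ Fin n' → Prop}
    (u v : Fin (m' + m) ⊕ Fin (n' + n)) :
    oplus P R u v ↔
      oplus R P (Sum.map (sfun m' m) (sfun n' n) u) (Sum.map (sfun m' m) (sfun n' n) v) := by
  constructor
  · exact oplus_swap_mp u v
  · intro h
    have := oplus_swap_mp _ _ h
    rwa [sum_map_sfun_sfun, sum_map_sfun_sfun] at this

theorem comp_map_eq {m n m' n' : ℕ} (z : Fin (m + m') ⊕ Fin (n' + n)) :
    Sum.map (sfun m' m) (sfun n' n) (Sum.map (sfun m m') id z)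
      = Sum.map id (sfun n' n) z := by
  rcases z with k | k <;> simp [sfun_sfun]

end AuxBr2

/-- the block swap is a Brauerian split equivalence, it is an
involution (σ_{n,m} ∗ σ_{m,n} = 1_{m+n}), and it is natural with respect to the
shifted disjoint union: (P ⊕ R) ∗ σ_{m,m'} = σ_{n,n'} ∗ (R ⊕ P). -/
theorem blockSwap_symmetry {m n m' n' : ℕ}
    (R : Fin m ⊕ Fin n → Fin m ⊕ Fin n → Prop)
    (P : Fin m' ⊕ Fin n' → Fin m' ⊕ Fin n' → Prop)
    (hR : IsBrauerian R) (hP : IsBrauerian P) :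
    IsBrauerian (blockSwap m n) ∧
    (∀ x y, splitComp (blockSwap m n) (blockSwap n m) x y ↔ idBr (m + n) x y) ∧
    (∀ x y, splitComp (blockSwap m m') (oplus P R) x y ↔
      splitComp (oplus R P) (blockSwap n n') x y) := by
  refine ⟨?_, ?_, ?_⟩
  · rw [blockSwap_eq_graph]
    exact graphRel_brauerian (sfun m n) (sfun n m) (sfun_sfun m n) (sfun_sfun n m)
  · intro x y
    rw [blockSwap_eq_graph m n, blockSwap_eq_graph n m,
      splitComp_graph_left _ _ (graphRel_equiv (sfun n m) (sfun m n) (sfun_sfun n m))]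
    rcases x with a | c <;> rcases y with a' | c' <;>
      simp only [Sum.map_inl, Sum.map_inr, id_eq]
    · constructor
      · rintro (h | ⟨k, (⟨h1, h2⟩ | ⟨h1, h2⟩)⟩)
        · have : a = a' := by
            have h2 := congrArg (sfun n m) (inl.inj h)
            rwa [sfun_sfun, sfun_sfun] at h2
          simp [idBr, this]
        · exact absurd h2 (by simp)
        · exact absurd h2 (by simp)
      · intro h
        have : a = a' := Fin.ext (by simpa [idBr] using h)
        exact Or.inl (by rw [this])
    · constructor
      · rintro (h | ⟨k, (⟨h1, h2⟩ | ⟨h1, h2⟩)⟩)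
        · exact absurd h (by simp)
        · have hk := inl.inj h1
          have hc := inr.inj h2
          subst hk
          rw [sfun_sfun] at hc
          simp [idBr, hc]
        · exact absurd h1 (by simp)
      · intro h
        have hac : c' = a := Fin.ext (by simpa [idBr] using h.symm)
        rw [hac]
        exact Or.inr ⟨sfun m n a, Or.inl ⟨rfl, by rw [sfun_sfun]⟩⟩
    · constructor
      · rintro (h | ⟨k, (⟨h1, h2⟩ | ⟨h1, h2⟩)⟩)
        · exact absurd h (by simp)
        · exact absurd h1 (by simp)
        · have hk := inl.inj h1
          have hc := inr.inj h2
          subst hk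
          rw [sfun_sfun] at hc
          simp [idBr, hc]
      · intro h
        have hac : c = a' := Fin.ext (by simpa [idBr] using h)
        rw [hac]
        exact Or.inr ⟨sfun m n a', Or.inr ⟨rfl, by rw [sfun_sfun]⟩⟩
    · constructor
      · rintro (h | ⟨k, (⟨h1, h2⟩ | ⟨h1, h2⟩)⟩)
        · have := inr.inj h
          simp [idBr, this]
        · exact absurd h1 (by simp)
        · exact absurd h1 (by simp)
      · intro h
        have : c = c' := Fin.ext (by simpa [idBr] using h)
        exact Or.inl (by rw [this])
  · intro x y
    rw [blockSwap_eq_graph m m', blockSwap_eq_graph n n',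
      splitComp_graph_left _ _ (oplus_equiv hP.1 hR.1),
      splitComp_graph_right _ (sfun n' n) (sfun_sfun n n') (sfun_sfun n' n) _
        (oplus_equiv hR.1 hP.1),
      oplus_swap, comp_map_eq, comp_map_eq]
end
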